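/- Let G be a finite p-group of order ≥ p^{2m} and [c] ∈ H²(G, ℂ*) any cohomology class. Then there exists a subgroup H < G of order exactly p^m with res^G_H [c] = 0. -/

import Mathlib

/-! Induction on `m`. A nontrivial `p`-group has a central element `x` of order `p`. Since `x` is
central, `g ↦ c(g, x) - c(x, g)` is a homomorphism with values of order dividing `p`, so its kernel
`K` has index at most `p`. On `K` the element `x` is `c`-regular, and after adding a coboundary
(this uses a `p`-th root in `ℂˣ`) the restriction of `c` to `K` becomes invariant under
translation by `⟨x⟩`, i.e. it is inflated from `K ⧸ ⟨x⟩`, a `p`-group of order at least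
`p ^ (2m)`. The preimage in `K` of an isotropic subgroup of order `p ^ m` of the quotient is
isotropic of order `p ^ (m + 1)`. -/

open Finset Subgroup

section

variable {G α A : Type*} [Group G] [AddCommGroup A]

theorem apply_mul_of_mem_zpowers {F : G → α} {x : G} (hF : ∀ a, F (a * x) = F a) {n : G}
    (hn : n ∈ zpowers x) (a : G) : F (a * n) = F a := by
  obtain ⟨k, rfl⟩ := mem_zpowers_iff.mp hn
  clear hn
  induction k using Int.induction_on with
  | zero => simp
  | succ k ih => rw [zpow_add_one, ← mul_assoc, hF, ih]
  | pred k ih => rw [← hF, mul_assoc, ← zpow_add_one, sub_add_cancel, ih]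

theorem exists_apply_mul_eq_add_of_sum_eq_zero {x : G} (hx : IsOfFinOrder x) (ψ : G → A)
    (hψ : ∀ g, ∑ j ∈ range (orderOf x), ψ (g * x ^ j) = 0) :
    ∃ μ : G → A, ∀ g, μ (g * x) = μ g + ψ g := by
  let r : G → G := fun g => Quotient.out (g : G ⧸ zpowers x)
  have hrx (g : G) : r (g * x) = r g :=
    congrArg Quotient.out (QuotientGroup.eq.mpr (by simp))
  have hr (g : G) : ∃ k : ℕ, r g * x ^ k = g := by
    obtain ⟨h, hh⟩ := QuotientGroup.mk_out_eq_mul (zpowers x) g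
    obtain ⟨k, hk⟩ := hx.mem_powers_iff_mem_zpowers.mpr (inv_mem h.2)
    exact ⟨k, by
      rw [show x ^ k = (h : G)⁻¹ from hk, show r g = _ from hh, mul_inv_cancel_right]⟩
  choose k hk using hr
  -- `μ g` is a partial sum of `ψ` along the coset of `g`, starting at its representative `r g`;
  -- `hψ` makes it depend only on the exponent modulo `orderOf x`.
  let P (r : G) (n : ℕ) : A := ∑ j ∈ range n, ψ (r * x ^ j)
  have hP (r : G) {n n' : ℕ} (h : x ^ n = x ^ n') : P r n = P r n' := by
    have hper : Function.Periodic (P r) (orderOf x) := fun n => by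
      simp only [P, sum_range_add, pow_add, ← mul_assoc, hψ, add_zero]
    rw [← hper.map_mod_nat, ← hper.map_mod_nat n', pow_eq_pow_iff_modEq.mp h]
  refine ⟨fun g => P (r g) (k g), fun g => ?_⟩
  have hkx : x ^ k (g * x) = x ^ (k g + 1) :=
    mul_left_cancel (a := r g) (by rw [← hrx g, hk, hrx, pow_succ, ← mul_assoc, hk])
  simp only [hrx, hP _ hkx, P, sum_range_succ, hk]

theorem Subgroup.normal_zpowers_of_mem_center {x : G} (hx : x ∈ center G) : (zpowers x).Normal :=
  ⟨fun n hn g => by rwa [mem_center_iff.mp (zpowers_le.mpr hx hn) g, mul_inv_cancel_right]⟩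

end

section Cocycles

variable {G A : Type*} [Group G] [AddCommGroup A]

-- Cochains take values in an additive group with trivial action; `ℂˣ` enters as `Additive ℂˣ`.
def IsTwoCocycle (c : G → G → A) : Prop :=
  ∀ g h k, c g h + c (g * h) k = c h k + c g (h * k)

def coboundary (f : G → A) (a b : G) : A :=
  f a + f b - f (a * b)

def IsIsotropic (c : G → G → A) (H : Subgroup G) : Prop :=
  ∃ f : H → A, ∀ a b : H, c a b = coboundary f a b

namespace IsTwoCocycle

variable {c : G → G → A} (hc : IsTwoCocycle c)
include hc

theorem apply_one_right (g : G) : c g 1 = c 1 1 := by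
  simpa using hc g 1 1

theorem apply_one_left (g : G) : c 1 g = c 1 1 := by
  simpa using (hc 1 1 g).symm

theorem comp {K : Type*} [Group K] (φ : K →* G) : IsTwoCocycle fun a b => c (φ a) (φ b) :=
  fun g h k => by simpa only [map_mul] using hc (φ g) (φ h) (φ k)

theorem add_coboundary (f : G → A) : IsTwoCocycle fun a b => c a b + coboundary f a b := by
  intro g h k
  simp only [coboundary, mul_assoc]
  linear_combination (norm := abel) hc g h k

theorem pairing_mul_left {x : G} (hx : x ∈ center G) (g h : G) :
    c (g * h) x - c x (g * h) = (c g x - c x g) + (c h x - c x h) := by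
  have E₁ := hc x g h
  have E₂ := hc g x h
  rw [(mem_center_iff.mp hx g).symm] at E₁
  rw [(mem_center_iff.mp hx h).symm] at E₂
  linear_combination (norm := abel) E₁ - E₂ + hc g h x

theorem pairing_mul_right {u v : G} (hu : u ∈ center G) (hv : v ∈ center G) (g : G) :
    c g (u * v) - c (u * v) g = (c g u - c u g) + (c g v - c v g) := by
  have E := hc u g v
  rw [(mem_center_iff.mp hu g).symm, mem_center_iff.mp hv g] at E
  linear_combination (norm := abel) E - hc g u v - hc u v g

theorem pairing_pow {x : G} (hx : x ∈ center G) (g : G) (n : ℕ) :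
    c g (x ^ n) - c (x ^ n) g = n • (c g x - c x g) := by
  induction n with
  | zero => simp [hc.apply_one_left, hc.apply_one_right]
  | succ n ih => rw [pow_succ, hc.pairing_mul_right (pow_mem hx n) hx, ih, succ_nsmul]

def pairingHom {x : G} (hx : x ∈ center G) : G →* Multiplicative A where
  toFun g := Multiplicative.ofAdd (c g x - c x g)
  map_one' := by simp [hc.apply_one_left, hc.apply_one_right]
  map_mul' g h := by rw [hc.pairing_mul_left hx]; rfl

theorem mem_ker_pairingHom {x : G} (hx : x ∈ center G) {g : G} :
    g ∈ (hc.pairingHom hx).ker ↔ c g x = c x g :=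
  ofAdd_eq_one.trans sub_eq_zero

theorem index_ker_pairingHom_le [Finite G] {p : ℕ} (htors : {a : A | p • a = 0}.encard ≤ p)
    {x : G} (hx : x ∈ center G) (hxp : x ^ p = 1) : (hc.pairingHom hx).ker.index ≤ p := by
  have hrange : ((hc.pairingHom hx).range : Set (Multiplicative A)) ⊆
      Multiplicative.ofAdd '' {a | p • a = 0} := by
    rintro _ ⟨g, rfl⟩
    refine ⟨_, ?_, rfl⟩
    show p • (c g x - c x g) = 0
    rw [← hc.pairing_pow hx, hxp, hc.apply_one_left, hc.apply_one_right, sub_self]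
  have : Finite ((hc.pairingHom hx).range : Set (Multiplicative A)) :=
    inferInstanceAs (Finite (Set.range _))
  have hcard : (Nat.card (hc.pairingHom hx).range : ℕ∞) ≤ p := calc
    _ = ((hc.pairingHom hx).range : Set (Multiplicative A)).encard :=
        (ENat.card_eq_coe_natCard _).symm
    _ ≤ (Multiplicative.ofAdd '' {a : A | p • a = 0}).encard := Set.encard_le_encard hrange
    _ = {a : A | p • a = 0}.encard := Multiplicative.ofAdd.injective.encard_image _
    _ ≤ p := htors
  rw [index_ker]
  exact_mod_cast hcard

theorem sum_range_apply_mul_pow (b x : G) (n : ℕ) :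
    ∑ j ∈ range n, c (b * x ^ j) x + c b 1 = ∑ j ∈ range n, c (x ^ j) x + c b (x ^ n) := by
  induction n with
  | zero => simp
  | succ n ih =>
    have E := hc b (x ^ n) x
    rw [← pow_succ] at E
    rw [sum_range_succ, sum_range_succ]
    linear_combination (norm := abel) ih + E

theorem sum_range_apply_mul_pow_eq {x : G} {n : ℕ} (hxn : x ^ n = 1) (b : G) :
    ∑ j ∈ range n, c (b * x ^ j) x = ∑ j ∈ range n, c (x ^ j) x := by
  simpa [hxn] using hc.sum_range_apply_mul_pow b x n

section Normalization

variable {x : G} {μ : G → A} {κ : A} (hμ : ∀ g, μ (g * x) = μ g + (c g x + κ))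
include hμ

theorem add_coboundary_mul_right_left (hx : x ∈ center G) (hreg : ∀ g, c g x = c x g)
    (a b : G) : c (a * x) b + coboundary μ (a * x) b = c a b + coboundary μ a b := by
  have E := hc a x b
  have hxb : x * b = b * x := (mem_center_iff.mp hx b).symm
  rw [hxb] at E
  rw [coboundary, coboundary, mul_assoc, hxb, ← mul_assoc, hμ, hμ]
  linear_combination (norm := abel) E - hc a b x - hreg b

theorem add_coboundary_mul_right_right (a b : G) :
    c a (b * x) + coboundary μ a (b * x) = c a b + coboundary μ a b := by
  rw [coboundary, coboundary, ← mul_assoc, hμ, hμ]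
  linear_combination (norm := abel) -hc a b x

end Normalization

theorem exists_quotient_cocycle {N : Subgroup G} [N.Normal]
    (hl : ∀ a b, ∀ n ∈ N, c (a * n) b = c a b) (hr : ∀ a b, ∀ n ∈ N, c a (b * n) = c a b) :
    ∃ cbar : G ⧸ N → G ⧸ N → A, IsTwoCocycle cbar ∧ ∀ a b : G, cbar a b = c a b := by
  have hout (a b : G) : c (a : G ⧸ N).out (b : G ⧸ N).out = c a b := by
    obtain ⟨n, hn⟩ := QuotientGroup.mk_out_eq_mul N a
    obtain ⟨n', hn'⟩ := QuotientGroup.mk_out_eq_mul N b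
    rw [hn, hn', hr _ _ _ n'.2, hl _ _ _ n.2]
  refine ⟨fun q r => c q.out r.out, fun q r s => ?_, hout⟩
  induction q using QuotientGroup.induction_on
  induction r using QuotientGroup.induction_on
  induction s using QuotientGroup.induction_on
  simp only [← QuotientGroup.mk_mul, hout]
  exact hc _ _ _

theorem exists_inflation {x : G} (hx : x ∈ center G) (hfin : IsOfFinOrder x)
    [(zpowers x).Normal] (hreg : ∀ g, c g x = c x g) (hdiv : ∀ a : A, ∃ b, orderOf x • b = a) :
    ∃ cbar : G ⧸ zpowers x → G ⧸ zpowers x → A, IsTwoCocycle cbar ∧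
      ∃ μ : G → A, ∀ a b : G, cbar a b = c a b + coboundary μ a b := by
  -- `κ` makes `c (·) x + κ` sum to zero over every coset of `⟨x⟩`.
  obtain ⟨κ, hκ⟩ := hdiv (-∑ j ∈ range (orderOf x), c (x ^ j) x)
  obtain ⟨μ, hμ⟩ := exists_apply_mul_eq_add_of_sum_eq_zero hfin (fun g => c g x + κ) fun g => by
    rw [sum_add_distrib, sum_const, card_range,
      hc.sum_range_apply_mul_pow_eq (pow_orderOf_eq_one x), hκ, add_neg_cancel]
  obtain ⟨cbar, hcbar, hcbar_eq⟩ := (hc.add_coboundary μ).exists_quotient_cocycle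
    (fun a b _ hn => apply_mul_of_mem_zpowers (F := fun a => c a b + coboundary μ a b)
      (fun a => hc.add_coboundary_mul_right_left hμ hx hreg a b) hn a)
    (fun a b _ hn => apply_mul_of_mem_zpowers (F := fun b => c a b + coboundary μ a b)
      (fun b => hc.add_coboundary_mul_right_right hμ a b) hn b)
  exact ⟨cbar, hcbar, μ, hcbar_eq⟩

end IsTwoCocycle

end Cocycles

section Isotropic

variable {G K A : Type*} [Group G] [Group K] [AddCommGroup A]

theorem isIsotropic_bot (c : G → G → A) : IsIsotropic c ⊥ := by
  refine ⟨fun _ => c 1 1, ?_⟩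
  rintro ⟨a, ha⟩ ⟨b, hb⟩
  rw [mem_bot] at ha hb
  subst ha hb
  simp [coboundary]

theorem IsIsotropic.of_add_coboundary {c : G → G → A} {H : Subgroup G} {μ : G → A}
    (h : IsIsotropic (fun a b => c a b + coboundary μ a b) H) : IsIsotropic c H := by
  obtain ⟨f, hf⟩ := h
  refine ⟨fun a => f a - μ a, fun a b => ?_⟩
  have E := hf a b
  simp only [coboundary, Subgroup.coe_mul] at E ⊢
  linear_combination (norm := abel) E

theorem IsIsotropic.comap {c : G → G → A} {H : Subgroup G} (h : IsIsotropic c H)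
    (φ : K →* G) : IsIsotropic (fun a b => c (φ a) (φ b)) (H.comap φ) := by
  obtain ⟨f, hf⟩ := h
  refine ⟨fun a => f ⟨φ a, a.2⟩, fun a b => ?_⟩
  have hab : (⟨φ a, a.2⟩ * ⟨φ b, b.2⟩ : H) = ⟨φ ((a * b : H.comap φ) : K), (a * b).2⟩ :=
    Subtype.ext (map_mul φ (a : K) (b : K)).symm
  rw [coboundary, ← hab]
  exact hf ⟨φ a, a.2⟩ ⟨φ b, b.2⟩

theorem IsIsotropic.map {c : G → G → A} {φ : K →* G} (hφ : Function.Injective φ)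
    {H : Subgroup K} (h : IsIsotropic (fun a b => c (φ a) (φ b)) H) : IsIsotropic c (H.map φ) := by
  obtain ⟨f, hf⟩ := h
  let e := H.equivMapOfInjective φ hφ
  refine ⟨fun a => f (e.symm a), fun a b => ?_⟩
  obtain ⟨a, rfl⟩ := e.surjective a
  obtain ⟨b, rfl⟩ := e.surjective b
  simpa [coboundary, e, ← map_mul] using hf a b

end Isotropic

theorem IsTwoCocycle.exists_isotropic_of_quotient_zpowers {G A : Type*} [Group G]
    [AddCommGroup A] {c : G → G → A} (hc : IsTwoCocycle c) {x : G} (hx : x ∈ center G)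
    (hfin : IsOfFinOrder x) [(zpowers x).Normal] (hreg : ∀ g, c g x = c x g)
    (hdiv : ∀ a : A, ∃ b, orderOf x • b = a) {n : ℕ}
    (hQ : ∀ cbar : G ⧸ zpowers x → G ⧸ zpowers x → A, IsTwoCocycle cbar →
      ∃ Hbar : Subgroup (G ⧸ zpowers x), Nat.card Hbar = n ∧ IsIsotropic cbar Hbar) :
    ∃ H : Subgroup G, Nat.card H = orderOf x * n ∧ IsIsotropic c H := by
  obtain ⟨cbar, hcbar, μ, hμ⟩ := hc.exists_inflation hx hfin hreg hdiv
  obtain ⟨Hbar, hcard, hiso⟩ := hQ cbar hcbar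
  refine ⟨Hbar.comap (QuotientGroup.mk' _), ?_, ?_⟩
  · rw [← hcard, ← Nat.card_zpowers]
    exact QuotientGroup.card_preimage_mk _ _
  · have hinf : (fun a b => cbar (QuotientGroup.mk' _ a) (QuotientGroup.mk' _ b)) =
        fun a b => c a b + coboundary μ a b := funext₂ hμ
    exact IsIsotropic.of_add_coboundary (hinf ▸ hiso.comap (QuotientGroup.mk' _))

theorem IsPGroup.exists_mem_center_orderOf_eq {G : Type*} [Group G] [Finite G] [Nontrivial G]
    {p : ℕ} [Fact p.Prime] (hG : IsPGroup p G) : ∃ x ∈ center G, orderOf x = p := by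
  have := hG.center_nontrivial
  obtain ⟨x, hx⟩ := exists_prime_orderOf_dvd_card' (G := center G) p
    ((hG.to_subgroup _).card_eq_or_dvd.resolve_left Finite.one_lt_card.ne')
  exact ⟨x, x.2, by rw [Subgroup.orderOf_coe, hx]⟩

theorem IsTwoCocycle.exists_index_le_regular_mem_center {G A : Type*} [Group G] [Finite G]
    [Nontrivial G] [AddCommGroup A] {c : G → G → A} (hc : IsTwoCocycle c) {p : ℕ} [Fact p.Prime]
    (hG : IsPGroup p G) (htors : {a : A | p • a = 0}.encard ≤ p) :
    ∃ K : Subgroup G, K.index ≤ p ∧ ∃ x ∈ center K, orderOf x = p ∧ ∀ g : K, c g x = c x g := by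
  obtain ⟨x, hx, hxp⟩ := hG.exists_mem_center_orderOf_eq
  have hxK : x ∈ (hc.pairingHom hx).ker := (hc.mem_ker_pairingHom hx).mpr rfl
  refine ⟨_, hc.index_ker_pairingHom_le htors hx (hxp ▸ pow_orderOf_eq_one x), ⟨x, hxK⟩,
    mem_center_iff.mpr fun g => Subtype.ext (mem_center_iff.mp hx g), by rwa [orderOf_mk],
    fun g => (hc.mem_ker_pairingHom hx).mp g.2⟩

universe u

theorem exists_isotropic_subgroup_of_pow_le_card {A : Type*} [AddCommGroup A] {p : ℕ}
    [Fact p.Prime] (hdiv : ∀ a : A, ∃ b, p • b = a) (htors : {a : A | p • a = 0}.encard ≤ p)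
    (m : ℕ) : ∀ {G : Type u} [Group G] [Finite G], IsPGroup p G → p ^ (2 * m) ≤ Nat.card G →
      ∀ c : G → G → A, IsTwoCocycle c →
        ∃ H : Subgroup G, Nat.card H = p ^ m ∧ IsIsotropic c H := by
  induction m with
  | zero => exact fun _ _ c _ => ⟨⊥, by simp, isIsotropic_bot c⟩
  | succ m ih =>
    intro G _ _ hG hcard c hc
    have hp : p.Prime := Fact.out
    have : Nontrivial G := Finite.one_lt_card_iff_nontrivial.mp
      ((one_lt_pow₀ hp.one_lt (by omega)).trans_le hcard)
    obtain ⟨K, hK, x, hx, hxp, hreg⟩ := hc.exists_index_le_regular_mem_center hG htors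
    have := normal_zpowers_of_mem_center hx
    have hQ : p ^ (2 * m) ≤ Nat.card (K ⧸ zpowers x) := by
      refine Nat.le_of_mul_le_mul_right (?_ : _ * (p * p) ≤ _ * (p * p))
        (Nat.mul_pos hp.pos hp.pos)
      calc p ^ (2 * m) * (p * p) = p ^ (2 * (m + 1)) := by ring
        _ ≤ Nat.card K * K.index := K.card_mul_index ▸ hcard
        _ ≤ Nat.card (K ⧸ zpowers x) * p * p := by
          rw [(zpowers x).card_eq_card_quotient_mul_card_subgroup, Nat.card_zpowers, hxp]
          gcongr
        _ = _ := by ring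
    obtain ⟨H, hH, hiso⟩ := (hc.comp K.subtype).exists_isotropic_of_quotient_zpowers hx
      (isOfFinOrder_of_finite x) hreg (hxp ▸ hdiv)
      fun cbar hcbar => ih ((hG.to_subgroup K).to_quotient _) hQ cbar hcbar
    refine ⟨H.map K.subtype, ?_, hiso.map K.subtype_injective⟩
    rw [card_map_of_injective K.subtype_injective, hH, hxp, pow_succ, mul_comm]

theorem exists_nsmul_eq_additive_units {k : Type*} [Field k] [IsAlgClosed k] {n : ℕ}
    (hn : n ≠ 0) (a : Additive kˣ) : ∃ b, n • b = a := by
  obtain ⟨z, hz⟩ := IsAlgClosed.exists_pow_nat_eq (a.toMul : k) (Nat.pos_of_ne_zero hn)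
  have hz0 : z ≠ 0 := by
    rintro rfl
    exact a.toMul.ne_zero (by rw [← hz, zero_pow hn])
  refine ⟨Additive.ofMul (Units.mk0 z hz0), Additive.toMul.injective (Units.ext ?_)⟩
  simp [hz]

theorem encard_setOf_nsmul_eq_zero_additive_units_le (k : Type*) [CommRing k] [IsDomain k]
    (n : ℕ) [NeZero n] : {a : Additive kˣ | n • a = 0}.encard ≤ n := by
  have hset :
      {a : Additive kˣ | n • a = 0} = Additive.ofMul '' (rootsOfUnity n k : Set kˣ) := by
    ext a
    simp [mem_rootsOfUnity, ← toMul_nsmul]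
  have : Finite (rootsOfUnity n k : Set kˣ) := inferInstanceAs (Finite (rootsOfUnity n k))
  rw [hset, Additive.ofMul.injective.encard_image, Set.encard, ENat.card_eq_coe_natCard]
  exact_mod_cast card_rootsOfUnity k n

/-- Let `G` be a finite `p`-group of order `≥ p^{2m}` and
`[c] ∈ H²(G, ℂ*)` any class. Then there is a subgroup `H < G` of order exactly `p^m`
on which the restriction of `[c]` is trivial (i.e. a coboundary). -/
theorem pgroup_isotropic_subgroup
    {G : Type*} [Group G] [Fintype G] (p : ℕ) [Fact p.Prime]
    (hG : IsPGroup p G) (m : ℕ) (hm : p ^ (2 * m) ≤ Fintype.card G)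
    (c : G → G → ℂˣ)
    (hc : ∀ g h k : G, c g h * c (g * h) k = c h k * c g (h * k)) :
    ∃ H : Subgroup G, Nat.card H = p ^ m ∧
      ∃ f : H → ℂˣ, ∀ a b : H, c (a : G) (b : G) = f a * f b * (f (a * b))⁻¹ := by
  have : NeZero p := ⟨(Fact.out : p.Prime).ne_zero⟩
  obtain ⟨H, hH, f, hf⟩ := exists_isotropic_subgroup_of_pow_le_card
    (exists_nsmul_eq_additive_units (NeZero.ne p))
    (encard_setOf_nsmul_eq_zero_additive_units_le ℂ p) m hG (by rwa [Nat.card_eq_fintype_card])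
    (fun a b => Additive.ofMul (c a b)) fun g h k => congrArg Additive.ofMul (hc g h k)
  refine ⟨H, hH, fun a => (f a).toMul, fun a b => ?_⟩
  simpa [coboundary, div_eq_mul_inv] using congrArg Additive.toMul (hf a b)
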